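/- Let p = 6 and λ = 2cos(π/6) = √3, so U = ((√3,-1),(1,0)), and let k be an odd positive integer. Define q(z) = (√3·z² - 4z - √3)^{-k} + (√3·z² + 2z - 2√3)^{-k} + (2√3·z² + 2z - √3)^{-k}. Then q satisfies the rational period function relations of weight 2k on the Hecke group G_6: for every z ∈ ℂ with Im z ≠ 0, q(z) + z^{-2k}·q(-1/z) = 0 and Σ_{j=0}^{5} (q |_{2k} U^j)(z) = 0. (Its poles form the Hecke-symmetric irreducible system of poles with three positive poles (2+√7)/√3, (-1+√7)/√3, (-1+√7)/(2√3) and their T-images, corresponding to the conjugacy class of V₁V₃V₅.) -/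

import Mathlib

/-!
Each summand of `q` is `Q(z, 1)^{-k}` for a binary quadratic form `Q`, and slashing it by `M`
gives `(Q ∘ M)(z, 1)^{-k}`, by homogeneity of `Q`. Both relations therefore reduce to identities
between forms. Under `T` the three forms `Q₁, Q₂, Q₃` go to `-Q₁, -Q₃, -Q₂`, and `k` is odd, so
`q + q ∣ T = 0`. Under `U` one has `Q₁ ∘ U = -Q₃` and `Q₂ ∘ U³ = -Q₂`; since `U⁶ = -1` the
eighteen terms `(Qᵢ ∘ Uʲ)(z, 1)^{-k}`, `0 ≤ j < 6`, cancel in pairs.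
-/

/-- The weight-`2k` slash operator: for a real 2×2 matrix `M = ((a,b),(c,d))`,
`(f ∣_{2k} M)(z) = (cz+d)^{-2k} · f((az+b)/(cz+d))`. -/
noncomputable def slash (k : ℕ) (M : Matrix (Fin 2) (Fin 2) ℝ)
    (f : ℂ → ℂ) (z : ℂ) : ℂ :=
  ((M 1 0 : ℂ) * z + (M 1 1 : ℂ)) ^ (-(2 * (k : ℤ))) *
    f (((M 0 0 : ℂ) * z + (M 0 1 : ℂ)) / ((M 1 0 : ℂ) * z + (M 1 1 : ℂ)))

open Matrix

/-- The binary quadratic form with (not necessarily symmetric) matrix `A`; composing it with `M`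
is `Mᵀ * A * M`. -/
def quadAt (A : Matrix (Fin 2) (Fin 2) ℝ) (x y : ℂ) : ℂ :=
  A 0 0 * x ^ 2 + (A 0 1 + A 1 0) * x * y + A 1 1 * y ^ 2

lemma quadAt_neg (A : Matrix (Fin 2) (Fin 2) ℝ) (x y : ℂ) :
    quadAt (-A) x y = -quadAt A x y := by
  simp only [quadAt, Matrix.neg_apply, Complex.ofReal_neg]
  ring

lemma quadAt_transpose_mul_mul (M A : Matrix (Fin 2) (Fin 2) ℝ) (x y : ℂ) :
    quadAt (Mᵀ * A * M) x y =
      quadAt A (M 0 0 * x + M 0 1 * y) (M 1 0 * x + M 1 1 * y) := by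
  simp only [quadAt, mul_apply, transpose_apply, Fin.sum_univ_two]
  push_cast
  ring

lemma sq_mul_quadAt_div (A : Matrix (Fin 2) (Fin 2) ℝ) {x y : ℂ} (hy : y ≠ 0) :
    y ^ 2 * quadAt A (x / y) 1 = quadAt A x y := by
  simp only [quadAt]
  field_simp

lemma denom_ne_zero_of_det_ne_zero {M : Matrix (Fin 2) (Fin 2) ℝ} (hM : M.det ≠ 0) {z : ℂ}
    (hz : z.im ≠ 0) : (M 1 0 : ℂ) * z + M 1 1 ≠ 0 := by
  intro h
  have hc : M 1 0 = 0 := by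
    have him : M 1 0 * z.im = 0 := by simpa using congrArg Complex.im h
    exact (mul_eq_zero.mp him).resolve_right hz
  have hd : M 1 1 = 0 := by simpa [hc] using congrArg Complex.re h
  exact hM (by simp [det_fin_two, hc, hd])

lemma slash_add (k : ℕ) (M : Matrix (Fin 2) (Fin 2) ℝ) (f g : ℂ → ℂ) (z : ℂ) :
    slash k M (f + g) z = slash k M f z + slash k M g z := by
  simp only [slash, Pi.add_apply, mul_add]

noncomputable def quadZpow (k : ℕ) (A : Matrix (Fin 2) (Fin 2) ℝ) (z : ℂ) : ℂ :=
  quadAt A z 1 ^ (-(k : ℤ))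

lemma quadZpow_neg {k : ℕ} (hk : Odd k) (A : Matrix (Fin 2) (Fin 2) ℝ) (z : ℂ) :
    quadZpow k (-A) z = -quadZpow k A z := by
  rw [quadZpow, quadAt_neg, hk.natCast.neg.neg_zpow, quadZpow]

lemma slash_quadZpow (k : ℕ) {M : Matrix (Fin 2) (Fin 2) ℝ} (A : Matrix (Fin 2) (Fin 2) ℝ)
    {z : ℂ} (hz : (M 1 0 : ℂ) * z + M 1 1 ≠ 0) :
    slash k M (quadZpow k A) z = quadZpow k (Mᵀ * A * M) z := by
  have hpow : ((M 1 0 : ℂ) * z + M 1 1) ^ (-(2 * (k : ℤ))) =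
      (((M 1 0 : ℂ) * z + M 1 1) ^ 2) ^ (-(k : ℤ)) := by
    rw [← zpow_natCast, ← _root_.zpow_mul]
    push_cast
    ring_nf
  rw [slash, quadZpow, hpow, ← mul_zpow, sq_mul_quadAt_div A hz, quadZpow,
    quadAt_transpose_mul_mul]
  simp

noncomputable def orbitZpow (k : ℕ) (M A : Matrix (Fin 2) (Fin 2) ℝ) (z : ℂ) (j : ℕ) : ℂ :=
  quadZpow k ((M ^ j)ᵀ * A * M ^ j) z

lemma slash_pow_quadZpow (k : ℕ) {M : Matrix (Fin 2) (Fin 2) ℝ} (hM : M.det ≠ 0)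
    (A : Matrix (Fin 2) (Fin 2) ℝ) {z : ℂ} (hz : z.im ≠ 0) (j : ℕ) :
    slash k (M ^ j) (quadZpow k A) z = orbitZpow k M A z j :=
  slash_quadZpow k A (denom_ne_zero_of_det_ne_zero (by rw [det_pow]; exact pow_ne_zero j hM) hz)

lemma orbitZpow_add_of_transpose_mul_mul_eq_neg {k : ℕ} (hk : Odd k)
    {M A B : Matrix (Fin 2) (Fin 2) ℝ} {m : ℕ} (h : (M ^ m)ᵀ * A * M ^ m = -B) (z : ℂ) (j : ℕ) :
    orbitZpow k M A z (j + m) = -orbitZpow k M B z j := by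
  have hmat : (M ^ (j + m))ᵀ * A * M ^ (j + m) = -((M ^ j)ᵀ * B * M ^ j) :=
    calc (M ^ (j + m))ᵀ * A * M ^ (j + m) = (M ^ j)ᵀ * ((M ^ m)ᵀ * A * M ^ m) * M ^ j := by
          rw [add_comm, pow_add, transpose_mul]
          simp only [Matrix.mul_assoc]
      _ = -((M ^ j)ᵀ * B * M ^ j) := by rw [h, Matrix.mul_neg, Matrix.neg_mul]
  rw [orbitZpow, hmat, quadZpow_neg hk, orbitZpow]

lemma orbitZpow_periodic {M : Matrix (Fin 2) (Fin 2) ℝ} {n : ℕ} (hM : M ^ n = -1) (k : ℕ)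
    (A : Matrix (Fin 2) (Fin 2) ℝ) (z : ℂ) : Function.Periodic (orbitZpow k M A z) n := by
  intro j
  simp [orbitZpow, pow_add, hM]

lemma sum_range_succ_add_eq_zero {G : Type*} [AddCommGroup G] {g h : ℕ → G} (n : ℕ)
    (hstep : ∀ j, g (j + 1) = -h j) (hwrap : g 0 = -h n) :
    ∑ j ∈ Finset.range (n + 1), (g j + h j) = 0 := by
  rw [Finset.sum_add_distrib, Finset.sum_range_succ', Finset.sum_range_succ]
  simp only [hstep, hwrap, Finset.sum_neg_distrib]
  abel

lemma Function.Antiperiodic.sum_range_add_self {G : Type*} [AddCommGroup G] {g : ℕ → G}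
    {m : ℕ} (hg : Function.Antiperiodic g m) : ∑ j ∈ Finset.range (m + m), g j = 0 := by
  simp only [Finset.sum_range_add, add_comm m, hg _, Finset.sum_neg_distrib, add_neg_cancel]

def heckeU (s : ℝ) : Matrix (Fin 2) (Fin 2) ℝ := !![s, -1; 1, 0]

def heckeT : Matrix (Fin 2) (Fin 2) ℝ := !![0, -1; 1, 0]

def form₁ (s : ℝ) : Matrix (Fin 2) (Fin 2) ℝ := !![s, -2; -2, -s]

def form₂ (s : ℝ) : Matrix (Fin 2) (Fin 2) ℝ := !![s, 1; 1, -2 * s]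

def form₃ (s : ℝ) : Matrix (Fin 2) (Fin 2) ℝ := !![2 * s, 1; 1, -s]

noncomputable def rpf (k : ℕ) (s : ℝ) : ℂ → ℂ :=
  quadZpow k (form₁ s) + quadZpow k (form₂ s) + quadZpow k (form₃ s)

lemma det_heckeU (s : ℝ) : (heckeU s).det = 1 := by
  simp [heckeU, det_fin_two]

lemma heckeU_pow_three {s : ℝ} (hs : s ^ 2 = 3) : heckeU s ^ 3 = !![s, -2; 2, -s] := by
  ext i j
  fin_cases i <;> fin_cases j <;> simp [heckeU, pow_succ, mul_apply, Fin.sum_univ_two] <;> grind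

lemma heckeU_pow_six {s : ℝ} (hs : s ^ 2 = 3) : heckeU s ^ 6 = -1 := by
  rw [show 6 = 3 * 2 from rfl, pow_mul, heckeU_pow_three hs]
  ext i j
  fin_cases i <;> fin_cases j <;> simp [pow_succ, mul_apply, Fin.sum_univ_two] <;> grind

lemma transpose_heckeU_mul_form₁_mul {s : ℝ} (hs : s ^ 2 = 3) :
    (heckeU s)ᵀ * form₁ s * heckeU s = -form₃ s := by
  ext i j
  fin_cases i <;> fin_cases j <;> simp [heckeU, form₁, form₃, mul_apply, Fin.sum_univ_two] <;>
    grind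

lemma transpose_heckeU_pow_three_mul_form₂_mul {s : ℝ} (hs : s ^ 2 = 3) :
    (heckeU s ^ 3)ᵀ * form₂ s * heckeU s ^ 3 = -form₂ s := by
  rw [heckeU_pow_three hs]
  ext i j
  fin_cases i <;> fin_cases j <;> simp [form₂, mul_apply, Fin.sum_univ_two] <;> grind

lemma transpose_heckeT_mul_form₁_mul (s : ℝ) : heckeTᵀ * form₁ s * heckeT = -form₁ s := by
  ext i j
  fin_cases i <;> fin_cases j <;> simp [heckeT, form₁, mul_apply, Fin.sum_univ_two]

lemma transpose_heckeT_mul_form₂_mul (s : ℝ) : heckeTᵀ * form₂ s * heckeT = -form₃ s := by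
  ext i j
  fin_cases i <;> fin_cases j <;> simp [heckeT, form₂, form₃, mul_apply, Fin.sum_univ_two]

lemma transpose_heckeT_mul_form₃_mul (s : ℝ) : heckeTᵀ * form₃ s * heckeT = -form₂ s := by
  ext i j
  fin_cases i <;> fin_cases j <;> simp [heckeT, form₂, form₃, mul_apply, Fin.sum_univ_two]

lemma rpf_add_slash_heckeT {k : ℕ} (hk : Odd k) (s : ℝ) {z : ℂ} (hz : z ≠ 0) :
    rpf k s z + slash k heckeT (rpf k s) z = 0 := by
  have hden : (heckeT 1 0 : ℂ) * z + heckeT 1 1 ≠ 0 := by simpa [heckeT] using hz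
  rw [rpf, slash_add, slash_add, slash_quadZpow k _ hden, slash_quadZpow k _ hden,
    slash_quadZpow k _ hden, transpose_heckeT_mul_form₁_mul, transpose_heckeT_mul_form₂_mul,
    transpose_heckeT_mul_form₃_mul, quadZpow_neg hk, quadZpow_neg hk, quadZpow_neg hk]
  simp only [Pi.add_apply]
  ring

lemma sum_slash_heckeU_pow_rpf {k : ℕ} (hk : Odd k) {s : ℝ} (hs : s ^ 2 = 3) {z : ℂ}
    (hz : z.im ≠ 0) : ∑ j ∈ Finset.range 6, slash k (heckeU s ^ j) (rpf k s) z = 0 := by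
  have hdet : (heckeU s).det ≠ 0 := by simp [det_heckeU]
  have hstep (j : ℕ) : orbitZpow k (heckeU s) (form₁ s) z (j + 1) =
      -orbitZpow k (heckeU s) (form₃ s) z j :=
    orbitZpow_add_of_transpose_mul_mul_eq_neg hk
      (by simpa using transpose_heckeU_mul_form₁_mul hs) z j
  have h₁₃ : ∑ j ∈ Finset.range (5 + 1),
      (orbitZpow k (heckeU s) (form₁ s) z j + orbitZpow k (heckeU s) (form₃ s) z j) = 0 :=
    sum_range_succ_add_eq_zero 5 hstep
      (((orbitZpow_periodic (heckeU_pow_six hs) k _ z) 0).symm.trans (hstep 5))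
  have h₂ : ∑ j ∈ Finset.range (3 + 3), orbitZpow k (heckeU s) (form₂ s) z j = 0 :=
    Function.Antiperiodic.sum_range_add_self
      (orbitZpow_add_of_transpose_mul_mul_eq_neg hk
        (transpose_heckeU_pow_three_mul_form₂_mul hs) z)
  calc ∑ j ∈ Finset.range 6, slash k (heckeU s ^ j) (rpf k s) z
      = ∑ j ∈ Finset.range (5 + 1),
          (orbitZpow k (heckeU s) (form₁ s) z j + orbitZpow k (heckeU s) (form₃ s) z j) +
        ∑ j ∈ Finset.range (3 + 3), orbitZpow k (heckeU s) (form₂ s) z j := by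
        simp only [rpf, slash_add, slash_pow_quadZpow k hdet _ hz, Finset.sum_add_distrib]
        ring
    _ = 0 := by rw [h₁₃, h₂, add_zero]

theorem stmt17_general
    (lam : ℝ) (hlam : lam = 2 * Real.cos (Real.pi / 6))
    (U : Matrix (Fin 2) (Fin 2) ℝ) (hU : U = !![lam, -1; 1, 0])
    (k : ℕ) (hkodd : Odd k)
    (q : ℂ → ℂ)
    (hq : ∀ z : ℂ, q z =
      ((Real.sqrt 3 : ℂ) * z ^ 2 - 4 * z - (Real.sqrt 3 : ℂ)) ^ (-(k : ℤ)) +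
      ((Real.sqrt 3 : ℂ) * z ^ 2 + 2 * z - 2 * (Real.sqrt 3 : ℂ)) ^ (-(k : ℤ)) +
      (2 * (Real.sqrt 3 : ℂ) * z ^ 2 + 2 * z - (Real.sqrt 3 : ℂ)) ^ (-(k : ℤ))) :
    ∀ z : ℂ, z.im ≠ 0 →
      q z + z ^ (-(2 * (k : ℤ))) * q (-1 / z) = 0 ∧
      ∑ j ∈ Finset.range 6, slash k (U ^ j) q z = 0 := by
  intro z hz
  have hU' : U = heckeU (Real.sqrt 3) := by
    rw [hU, hlam, Real.cos_pi_div_six, heckeU]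
    ring_nf
  have hq' : q = rpf k (Real.sqrt 3) := by
    funext w
    simp only [hq, rpf, Pi.add_apply, quadZpow, quadAt, form₁, form₂, form₃, of_apply, cons_val',
      cons_val_zero, cons_val_one, cons_val_fin_one]
    push_cast
    ring_nf
  have hT : z ^ (-(2 * (k : ℤ))) * q (-1 / z) = slash k heckeT q z := by
    simp [slash, heckeT]
  have hz0 : z ≠ 0 := by
    rintro rfl
    simp at hz
  refine ⟨?_, ?_⟩
  · rw [hT, hq']
    exact rpf_add_slash_heckeT hkodd _ hz0
  · rw [hU', hq']
    exact sum_slash_heckeU_pow_rpf hkodd (Real.sq_sqrt (by norm_num)) hz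

/-- Let `p = 6` and `λ = 2cos(π/6) = √3`, so `U = ((√3,-1),(1,0))`,
and let `k` be an odd positive integer.  Define
`q(z) = (√3·z² - 4z - √3)^{-k} + (√3·z² + 2z - 2√3)^{-k} + (2√3·z² + 2z - √3)^{-k}`.
Then `q` satisfies the rational period function relations of weight `2k` on the
Hecke group `G_6`: for every `z ∈ ℂ` with `Im z ≠ 0`,
`q(z) + z^{-2k}·q(-1/z) = 0` and `Σ_{j=0}^{5} (q ∣_{2k} U^j)(z) = 0`. -/
theorem stmt17
    (lam : ℝ) (hlam : lam = 2 * Real.cos (Real.pi / 6))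
    (U : Matrix (Fin 2) (Fin 2) ℝ) (hU : U = !![lam, -1; 1, 0])
    (k : ℕ) (hk : 0 < k) (hkodd : Odd k)
    (q : ℂ → ℂ)
    (hq : ∀ z : ℂ, q z =
      ((Real.sqrt 3 : ℂ) * z ^ 2 - 4 * z - (Real.sqrt 3 : ℂ)) ^ (-(k : ℤ)) +
      ((Real.sqrt 3 : ℂ) * z ^ 2 + 2 * z - 2 * (Real.sqrt 3 : ℂ)) ^ (-(k : ℤ)) +
      (2 * (Real.sqrt 3 : ℂ) * z ^ 2 + 2 * z - (Real.sqrt 3 : ℂ)) ^ (-(k : ℤ))) :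
    ∀ z : ℂ, z.im ≠ 0 →
      q z + z ^ (-(2 * (k : ℤ))) * q (-1 / z) = 0 ∧
      ∑ j ∈ Finset.range 6, slash k (U ^ j) q z = 0 :=
  stmt17_general lam hlam U hU k hkodd q hq
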